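/- Let A_n be the Euler zigzag numbers, defined by sec(t) + tan(t) = ∑_{n≥0} A_n t^n/n!. Then A_{n+1} = B_n(A_0, A_1, ..., A_{n-1}) for all n ≥ 1, where B_n is the complete exponential Bell polynomial. -/

import Mathlib

/-- The partial (incomplete) exponential Bell polynomial `B_{n,k}(x_1, …, x_{n-k+1})`,
given by the explicit sum
`∑ n!/(c_1!⋯c_{n-k+1}!) (x_1/1!)^{c_1} ⋯ (x_{n-k+1}/(n-k+1)!)^{c_{n-k+1}}`
over all `c_i ≥ 0` with `∑ i·c_i = n` and `∑ c_i = k`. -/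
def partialBell {K : Type*} [Field K] (n k : ℕ) (x : ℕ → K) : K :=
  ∑ c ∈ (Fintype.piFinset fun _ : Fin (n - k + 1) => Finset.range (n + 1)).filter
      (fun c => (∑ i, (i.1 + 1) * c i) = n ∧ (∑ i, c i) = k),
    (Nat.factorial n : K) * ∏ i : Fin (n - k + 1),
      x (i.1 + 1) ^ c i /
        ((Nat.factorial (c i) : K) * (Nat.factorial (i.1 + 1) : K) ^ c i)

/-- The complete exponential Bell polynomial `B_n(x_1, …, x_n)`, with `B_0 = 1`. -/
def completeBell {K : Type*} [Field K] (n : ℕ) (x : ℕ → K) : K :=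
  if n = 0 then 1 else ∑ k ∈ Finset.Icc 1 n, partialBell n k x

/-! The function `f = sec + tan` satisfies `2 f' = 1 + f²`, hence `f'' = f f'`, and Leibniz's
rule turns this into `A_{n+2} = ∑ₖ C(n,k) A_k A_{n+1-k}`. The complete Bell polynomials satisfy
`B_{n+1}(x) = ∑ᵢ C(n,i) x_{i+1} B_{n-i}(x)`: in the explicit formula, write the factor `n + 1` as
the sum of the part sizes of each partition of `n + 1` and remove one part of size `i + 1`.
With `x_j = A_{j-1}` the two recurrences agree, and `B_0 = 1 = A_1` starts the induction. -/

open Finset Function Filter Topology Real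
open scoped Nat ENNReal

/-- `c i` is the number of parts of size `i + 1` in a partition of `m`. -/
def partitionTypes (N m : ℕ) : Finset (Fin N → ℕ) :=
  {c ∈ Fintype.piFinset fun _ : Fin N => range (m + 1) | ∑ i, (i.1 + 1) * c i = m}

lemma succ_mul_le_of_sum_eq {N m : ℕ} {c : Fin N → ℕ}
    (hc : ∑ i, (i.1 + 1) * c i = m) (i : Fin N) : (i.1 + 1) * c i ≤ m :=
  hc ▸ single_le_sum (f := fun j : Fin N => (j.1 + 1) * c j) (fun _ _ => Nat.zero_le _) (mem_univ i)

lemma mem_partitionTypes {N m : ℕ} {c : Fin N → ℕ} :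
    c ∈ partitionTypes N m ↔ ∑ i, (i.1 + 1) * c i = m := by
  refine ⟨fun h => (mem_filter.mp h).2, fun h => mem_filter.mpr ⟨?_, h⟩⟩
  refine Fintype.mem_piFinset.mpr fun i => mem_range.mpr (Nat.lt_succ_of_le ?_)
  exact (Nat.le_mul_of_pos_left _ i.1.succ_pos).trans (succ_mul_le_of_sum_eq h i)

lemma apply_eq_zero_of_le {N m : ℕ} {c : Fin N → ℕ} (hc : c ∈ partitionTypes N m) {i : Fin N}
    (hi : m ≤ i.1) : c i = 0 := by
  have hle := succ_mul_le_of_sum_eq (mem_partitionTypes.mp hc) i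
  by_contra hci
  have := Nat.le_mul_of_pos_right (i.1 + 1) (Nat.pos_of_ne_zero hci)
  omega

@[to_additive]
lemma Fintype.prod_apply_update {ι α M : Type*} [Fintype ι] [DecidableEq ι] [CommMonoid M]
    (g : ι → α → M) (c : ι → α) (i : ι) (b : α) :
    ∏ j, g j (update c i b j) = g i b * ∏ j ∈ univ \ {i}, g j (c j) := by
  rw [← prod_update_of_mem (mem_univ i)]
  exact Finset.prod_congr rfl fun j _ => apply_update g c i b j

lemma sum_succ_mul_update_add {N : ℕ} (c : Fin N → ℕ) (i : Fin N) (b : ℕ) :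
    ∑ j, (j.1 + 1) * update c i b j + (i.1 + 1) * c i = ∑ j, (j.1 + 1) * c j + (i.1 + 1) * b := by
  rw [Fintype.sum_apply_update (fun j : Fin N => ((j.1 + 1) * ·)),
    sum_eq_add_sum_sdiff_singleton_of_mem (mem_univ i)]
  ring

section Bell

variable {K : Type*} [Field K]

def bellFactor (x : ℕ → K) (i b : ℕ) : K :=
  x (i + 1) ^ b / ((b ! : K) * ((i + 1)! : K) ^ b)

def bellSum (N m : ℕ) (x : ℕ → K) : K :=
  ∑ c ∈ partitionTypes N m, ∏ i : Fin N, bellFactor x i (c i)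

def partialBellSum (N m k : ℕ) (x : ℕ → K) : K :=
  ∑ c ∈ partitionTypes N m with ∑ i, c i = k, ∏ i : Fin N, bellFactor x i (c i)

lemma partialBell_eq_factorial_mul (n k : ℕ) (x : ℕ → K) :
    partialBell n k x = n ! * partialBellSum (n - k + 1) n k x := by
  rw [partialBellSum, partitionTypes, filter_filter, mul_sum]
  rfl

@[simp] lemma bellFactor_zero (x : ℕ → K) (i : ℕ) : bellFactor x i 0 = 1 := by
  simp [bellFactor]

lemma mem_filter_partitionTypes {N m k : ℕ} {c : Fin N → ℕ} :
    c ∈ {c ∈ partitionTypes N m | ∑ i, c i = k} ↔ ∑ i, (i.1 + 1) * c i = m ∧ ∑ i, c i = k := by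
  rw [mem_filter, mem_partitionTypes]

lemma apply_eq_zero_of_sub_lt {N m k : ℕ} {c : Fin N → ℕ}
    (hc : c ∈ {c ∈ partitionTypes N m | ∑ i, c i = k}) {i : Fin N} (hi : m - k < i.1) :
    c i = 0 := by
  obtain ⟨hm, hk⟩ := mem_filter_partitionTypes.mp hc
  have hsplit : ∑ j, (j.1 + 1) * c j = ∑ j, j.1 * c j + ∑ j, c j := by
    rw [← sum_add_distrib]; simp only [add_mul, one_mul]
  have hle : i.1 * c i ≤ ∑ j, j.1 * c j :=
    single_le_sum (f := fun j : Fin N => j.1 * c j) (fun _ _ => Nat.zero_le _) (mem_univ i)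
  by_contra hc
  have := Nat.le_mul_of_pos_right i.1 (Nat.pos_of_ne_zero hc)
  omega

lemma partialBellSum_succ {N m k : ℕ} (hN : m - k < N) (x : ℕ → K) :
    partialBellSum (N + 1) m k x = partialBellSum N m k x := by
  have hlast : ∀ c ∈ {c ∈ partitionTypes (N + 1) m | ∑ i, c i = k}, c (Fin.last N) = 0 :=
    fun c hc => apply_eq_zero_of_sub_lt hc (by simpa using hN)
  refine sum_nbij' Fin.init (Fin.snoc · 0) (fun c hc => ?_) (fun c hc => ?_) (fun c hc => ?_)
    (fun c _ => Fin.init_snoc _ _) (fun c hc => ?_)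
  · have hc0 := hlast c hc
    rw [mem_filter_partitionTypes, Fin.sum_univ_castSucc, Fin.sum_univ_castSucc, hc0] at hc
    rw [mem_filter_partitionTypes]
    simpa [Fin.init] using hc
  · rw [mem_filter_partitionTypes] at hc ⊢
    simpa [Fin.sum_univ_castSucc] using hc
  · rw [← hlast c hc]
    exact Fin.snoc_init_self c
  · simp [Fin.prod_univ_castSucc, hlast c hc, Fin.init]

lemma partialBellSum_of_le {N N' m k : ℕ} (hN : m - k < N) (h : N ≤ N') (x : ℕ → K) :
    partialBellSum N' m k x = partialBellSum N m k x := by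
  induction N', h using Nat.le_induction with
  | base => rfl
  | succ N' hN' ih => rw [partialBellSum_succ (hN.trans_le hN'), ih]

lemma bellSum_zero (N : ℕ) (x : ℕ → K) : bellSum N 0 x = 1 := by
  have hzero : partitionTypes N 0 = {0} := by
    ext c
    simp [mem_partitionTypes, funext_iff]
  simp [bellSum, hzero]

lemma bellSum_eq_sum_partialBellSum (N : ℕ) {m : ℕ} (hm : 0 < m) (x : ℕ → K) :
    bellSum N m x = ∑ k ∈ Icc 1 m, partialBellSum N m k x := by
  refine (sum_fiberwise_of_maps_to (fun c hc => ?_) _).symm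
  rw [mem_partitionTypes] at hc
  have hle : ∑ i, c i ≤ m := hc ▸ sum_le_sum fun i _ => Nat.le_mul_of_pos_left _ i.1.succ_pos
  have hpos : 0 < ∑ i, c i := by
    refine Nat.pos_of_ne_zero fun h0 => hm.ne' ?_
    rw [← hc, sum_eq_zero fun i _ => by rw [sum_eq_zero_iff.mp h0 i (mem_univ i), mul_zero]]
  exact mem_Icc.mpr ⟨hpos, hle⟩

lemma completeBell_eq_factorial_mul_bellSum {n N : ℕ} (hN : n ≤ N) (x : ℕ → K) :
    completeBell n x = n ! * bellSum N n x := by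
  rcases Nat.eq_zero_or_pos n with rfl | hn
  · simp [completeBell, bellSum_zero]
  rw [completeBell, if_neg hn.ne', bellSum_eq_sum_partialBellSum N hn, mul_sum]
  refine sum_congr rfl fun k hk => ?_
  have hk1 := (mem_Icc.mp hk).1
  rw [partialBell_eq_factorial_mul, partialBellSum_of_le (N := n - k + 1) (N' := N) (by omega)
    (by omega)]

lemma bellFactor_succ [CharZero K] (x : ℕ → K) (i b : ℕ) :
    (((i + 1) * (b + 1) : ℕ) : K) * bellFactor x i (b + 1) = x (i + 1) / i ! * bellFactor x i b := by
  have hi := Nat.cast_add_one_ne_zero (R := K) i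
  have hb := Nat.cast_add_one_ne_zero (R := K) b
  rw [bellFactor, bellFactor, Nat.factorial_succ b, pow_succ, pow_succ, Nat.factorial_succ i]
  push_cast
  field_simp

/-- Removing one part of size `i + 1` is a bijection between the partition types of `m + 1`
having such a part and those of `m - i`. -/
lemma sum_mul_prod_bellFactor [CharZero K] {N m : ℕ} (x : ℕ → K) {i : Fin N} (hi : i.1 ≤ m) :
    ∑ c ∈ partitionTypes N (m + 1), (((i.1 + 1) * c i : ℕ) : K) * ∏ j : Fin N, bellFactor x j (c j)
      = x (i + 1) / i.1 ! * bellSum N (m - i) x := by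
  rw [bellSum, mul_sum, ← sum_filter_of_ne (p := fun c => c i ≠ 0)
    (fun c _ h hc => h (by simp [hc]))]
  symm
  refine sum_nbij' (fun c => update c i (c i + 1)) (fun c => update c i (c i - 1))
    (fun c hc => ?_) (fun c hc => ?_) (fun c _ => by simp) (fun c hc => ?_) (fun c _ => ?_)
  · have h := sum_succ_mul_update_add c i (c i + 1)
    rw [mem_partitionTypes] at hc
    simp only [mem_filter, mem_partitionTypes, update_self]
    rw [mul_add_one] at h
    omega
  · obtain ⟨hc, hci⟩ := mem_filter.mp hc
    obtain ⟨b, hb⟩ := Nat.exists_eq_add_one_of_ne_zero hci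
    have h := sum_succ_mul_update_add c i b
    rw [mem_partitionTypes] at hc ⊢
    rw [hb, Nat.add_sub_cancel]
    rw [hb, mul_add_one] at h
    omega
  · have hci := (mem_filter.mp hc).2
    simp [Nat.sub_add_cancel (Nat.one_le_iff_ne_zero.mpr hci)]
  · simp only [update_self]
    rw [Fintype.prod_apply_update (fun j : Fin N => bellFactor x j), ← mul_assoc, bellFactor_succ,
      prod_eq_mul_prod_sdiff_singleton_of_mem (mem_univ i), mul_assoc]

lemma succ_mul_bellSum [CharZero K] {N m : ℕ} (hN : m + 1 ≤ N) (x : ℕ → K) :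
    ((m : K) + 1) * bellSum N (m + 1) x =
      ∑ i ∈ range (m + 1), x (i + 1) / i ! * bellSum N (m - i) x := by
  let F : ℕ → K := fun i => if i ≤ m then x (i + 1) / i ! * bellSum N (m - i) x else 0
  calc ((m : K) + 1) * bellSum N (m + 1) x
      = ∑ c ∈ partitionTypes N (m + 1), ∑ i : Fin N,
          (((i.1 + 1) * c i : ℕ) : K) * ∏ j : Fin N, bellFactor x j (c j) := by
        rw [bellSum, mul_sum]
        refine sum_congr rfl fun c hc => ?_
        rw [← sum_mul, ← Nat.cast_sum, mem_partitionTypes.mp hc]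
        push_cast
        rfl
    _ = ∑ i : Fin N, F i := by
        rw [sum_comm]
        refine sum_congr rfl fun i _ => ?_
        simp only [F]
        split_ifs with hi
        · exact sum_mul_prod_bellFactor x hi
        · exact sum_eq_zero fun c hc => by simp [apply_eq_zero_of_le hc (by omega : m + 1 ≤ i.1)]
    _ = ∑ i ∈ range (m + 1), x (i + 1) / i ! * bellSum N (m - i) x := by
        rw [Fin.sum_univ_eq_sum_range F, sum_ite, sum_const_zero, add_zero]
        congr 1
        ext i
        simp only [mem_filter, mem_range]
        omega

theorem completeBell_succ [CharZero K] (m : ℕ) (x : ℕ → K) :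
    completeBell (m + 1) x =
      ∑ i ∈ range (m + 1), (m.choose i : K) * x (i + 1) * completeBell (m - i) x := by
  rw [completeBell_eq_factorial_mul_bellSum le_rfl, Nat.factorial_succ, Nat.cast_mul,
    Nat.cast_succ, mul_comm _ (m ! : K), mul_assoc, succ_mul_bellSum le_rfl, mul_sum]
  refine sum_congr rfl fun i hi => ?_
  have hi : i ≤ m := Nat.lt_succ_iff.mp (mem_range.mp hi)
  rw [completeBell_eq_factorial_mul_bellSum (N := m + 1) (by omega), Nat.cast_choose K hi]
  have := (Nat.cast_ne_zero (R := K)).mpr i.factorial_ne_zero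
  have := (Nat.cast_ne_zero (R := K)).mpr (m - i).factorial_ne_zero
  field_simp

end Bell

theorem hasFPowerSeriesOnBall_ofScalars_of_hasSum {f : ℝ → ℝ} {a : ℕ → ℝ} {r : ℝ} (hr : 0 < r)
    (h : ∀ t : ℝ, |t| < r → HasSum (fun n => a n * t ^ n / (n ! : ℝ)) (f t)) :
    HasFPowerSeriesOnBall f (FormalMultilinearSeries.ofScalars ℝ fun n => a n / n !) 0
      (ENNReal.ofReal r) where
  r_le := by
    refine ENNReal.le_of_forall_pos_nnreal_lt fun ρ _ hρ => ?_
    refine FormalMultilinearSeries.le_radius_of_tendsto _ (l := 0) ?_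
    have hρr : |(ρ : ℝ)| < r := by simpa [ENNReal.coe_lt_ofReal] using hρ
    refine Tendsto.congr (fun n => ?_) (by simpa using (h ρ hρr).summable.tendsto_atTop_zero.abs)
    rw [FormalMultilinearSeries.ofScalars_norm, Real.norm_eq_abs, abs_div, abs_div, abs_mul,
      abs_pow, NNReal.abs_eq]
    ring
  r_pos := by simpa using hr
  hasSum {y} hy := by
    have hy' : |y| < r := by simpa [Metric.mem_eball, edist_zero_right, Real.norm_eq_abs] using hy
    simpa [FormalMultilinearSeries.ofScalars_apply_eq, mul_div_right_comm, mul_comm] using h y hy'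

theorem HasFPowerSeriesAt.iteratedDeriv_eq_of_ofScalars {𝕜 : Type*} [NontriviallyNormedField 𝕜]
    [CompleteSpace 𝕜] [CharZero 𝕜] {f : 𝕜 → 𝕜} {a : ℕ → 𝕜} {x : 𝕜}
    (hf : HasFPowerSeriesAt f (FormalMultilinearSeries.ofScalars 𝕜 fun n => a n / n !) x)
    (n : ℕ) : iteratedDeriv n f x = a n := by
  have hcoeff := congrFun (FormalMultilinearSeries.ofScalars_series_injective 𝕜 𝕜
    (hf.analyticAt.hasFPowerSeriesAt.eq_formalMultilinearSeries hf)) n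
  exact (div_left_inj' (Nat.cast_ne_zero.mpr n.factorial_ne_zero)).mp hcoeff

theorem iteratedDeriv_add_two_of_deriv_deriv_eq {𝕜 : Type*} [NontriviallyNormedField 𝕜]
    [CompleteSpace 𝕜] {f : 𝕜 → 𝕜} {x : 𝕜} (hf : AnalyticAt 𝕜 f x)
    (hode : deriv (deriv f) =ᶠ[𝓝 x] f * deriv f) (n : ℕ) :
    iteratedDeriv (n + 2) f x = ∑ k ∈ Finset.range (n + 1),
      n.choose k * iteratedDeriv k f x * iteratedDeriv (n - k + 1) f x := by
  rw [iteratedDeriv_succ', iteratedDeriv_succ', hode.iteratedDeriv_eq,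
    iteratedDeriv_mul hf.contDiffAt hf.deriv.contDiffAt]
  simp only [iteratedDeriv_succ']

noncomputable def secAddTan (t : ℝ) : ℝ := 1 / cos t + tan t

theorem hasDerivAt_secAddTan {t : ℝ} (ht : cos t ≠ 0) :
    HasDerivAt secAddTan ((1 + secAddTan t ^ 2) / 2) t := by
  have hsec : HasDerivAt (fun y => 1 / cos y) (sin t / cos t ^ 2) t := by
    simpa [one_div] using (hasDerivAt_cos t).fun_inv ht
  refine (hsec.add (hasDerivAt_tan ht)).congr_deriv ?_
  simp only [secAddTan, tan_eq_sin_div_cos]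
  field_simp
  linear_combination -sin_sq_add_cos_sq t

theorem deriv_deriv_secAddTan_eventuallyEq :
    deriv (deriv secAddTan) =ᶠ[𝓝 0] secAddTan * deriv secAddTan := by
  have hU : IsOpen {t : ℝ | cos t ≠ 0} := isOpen_ne_fun continuous_cos continuous_const
  filter_upwards [hU.mem_nhds (by simp)] with t ht
  have heq : deriv secAddTan =ᶠ[𝓝 t] fun y => (1 + secAddTan y ^ 2) / 2 :=
    eventually_of_mem (hU.mem_nhds ht) fun y hy => (hasDerivAt_secAddTan hy).deriv
  have hsq : HasDerivAt (fun y => (1 + secAddTan y ^ 2) / 2)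
      (secAddTan t * ((1 + secAddTan t ^ 2) / 2)) t := by
    refine ((((hasDerivAt_secAddTan ht).fun_pow 2).const_add 1).div_const 2).congr_deriv ?_
    ring
  rw [heq.deriv_eq, hsq.deriv, Pi.mul_apply, (hasDerivAt_secAddTan ht).deriv]

open Real in
/-- Let `Aₙ` be the Euler zigzag numbers, defined by
`sec t + tan t = ∑_{n≥0} Aₙ·tⁿ/n!`.  Then `A_{n+1} = Bₙ(A₀, A₁, …, A_{n-1})` for `n ≥ 1`. -/
theorem zigzag_bell (A : ℕ → ℝ)
    (hA : ∀ t : ℝ, |t| < π / 2 →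
      HasSum (fun n : ℕ => A n * t ^ n / (Nat.factorial n : ℝ))
        (1 / Real.cos t + Real.tan t)) :
    ∀ n, 1 ≤ n → A (n + 1) = completeBell n (fun j => A (j - 1)) := by
  have hser : HasFPowerSeriesOnBall secAddTan
      (FormalMultilinearSeries.ofScalars ℝ fun n => A n / n !) 0 (ENNReal.ofReal (π / 2)) :=
    hasFPowerSeriesOnBall_ofScalars_of_hasSum (by positivity) hA
  have hcoeff : ∀ n, iteratedDeriv n secAddTan 0 = A n :=
    hser.hasFPowerSeriesAt.iteratedDeriv_eq_of_ofScalars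
  have hA1 : A 1 = 1 := by
    rw [← hcoeff, iteratedDeriv_one, (hasDerivAt_secAddTan (by simp)).deriv]
    norm_num [secAddTan]
  have hrec : ∀ n, A (n + 2) = ∑ k ∈ range (n + 1), n.choose k * A k * A (n - k + 1) := by
    simpa only [hcoeff] using iteratedDeriv_add_two_of_deriv_deriv_eq hser.analyticAt
      deriv_deriv_secAddTan_eventuallyEq
  suffices h : ∀ m, completeBell m (fun j => A (j - 1)) = A (m + 1) from fun n _ => (h n).symm
  intro m
  induction m using Nat.strong_induction_on with
  | _ m ih =>
    cases m with
    | zero => simp [completeBell, hA1]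
    | succ m =>
      rw [completeBell_succ, hrec]
      refine sum_congr rfl fun i hi => ?_
      have hi : i ≤ m := Nat.lt_succ_iff.mp (mem_range.mp hi)
      rw [ih (m - i) (by omega), Nat.add_sub_cancel]
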